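/- Let m ∈ ℕ and let (ρ_{E∧z})_{z∈{0,1}^m} be a cq-state on Z⊗E with Z = {0,1}^m and positive definite marginal ρ_E. For each nonzero s ∈ {0,1}^m and each bit i ∈ {0,1}, set ρ_{E∧(s·Z=i)} = Σ_{z : s·z = i} ρ_{E∧z} and Λ^s_i = ρ_E^{-1/2} ρ_{E∧(s·Z=i)} ρ_E^{-1/2} (the pretty good measurement associated to ρ_{(s·Z)E}). Then δ(ρ_{ZE}, ω_m ⊗ ρ_E) ≤ √( (1/2) · Σ_{s ≠ 0} d_s ), where d_s = (1/2) · Σ_{i,i' ∈ {0,1}} | tr(Λ^s_i ρ_{E∧(s·Z=i')}) − (1/2)·tr(Λ^s_i ρ_E) | is the trace distance between the classical state obtained by measuring the PGM of ρ_{(s·Z)E} on the E part of ρ_{(s·Z)E} and the product of the uniform one-bit state with the measured marginal. -/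

import Mathlib

open Matrix Kronecker BigOperators Finset ComplexOrder

/-- The positive semidefinite square root of a positive semidefinite matrix
(the definition removed from Mathlib, restored with its old value). -/
noncomputable def Matrix.PosSemidef.sqrt {n : Type*} [Fintype n] [DecidableEq n] {𝕜 : Type*}
    [RCLike 𝕜] {A : Matrix n n 𝕜} (hA : A.PosSemidef) : Matrix n n 𝕜 :=
  (hA.1.eigenvectorUnitary : Matrix n n 𝕜) *
    diagonal (fun i => ((Real.sqrt (hA.1.eigenvalues i) : ℝ) : 𝕜)) *
    (star hA.1.eigenvectorUnitary : Matrix n n 𝕜)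

/-- Bit strings of length `n`. -/
abbrev BS (n : ℕ) := Fin n → Bool

/-- Embedding of a bit into the field with two elements. -/
def toZ2 (b : Bool) : ZMod 2 := if b then 1 else 0

/-- Inner product modulo 2 of two bit strings. -/
def ipBool {n : ℕ} (x y : BS n) : Bool := decide ((∑ i, toZ2 (x i) * toZ2 (y i)) = 1)

/-- Multiplication of a bit string by a matrix over F₂. -/
def mulVecBool {n : ℕ} (L : Matrix (Fin n) (Fin n) (ZMod 2)) (x : BS n) : BS n :=
  fun i => decide ((L.mulVec fun j => toZ2 (x j)) i = 1)

/-- The `deor` extractor associated to a family of matrices over F₂. -/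
def deor {n m : ℕ} (A : Fin m → Matrix (Fin n) (Fin n) (ZMod 2)) (x y : BS n) : BS m :=
  fun i => ipBool (mulVecBool (A i) x) y

/-- Trace norm of a complex matrix: `tr √(SᴴS)`. -/
noncomputable def traceNorm {B : Type*} [Fintype B] [DecidableEq B] (S : Matrix B B ℂ) : ℝ :=
  ((Matrix.posSemidef_conjTranspose_mul_self S).sqrt.trace).re

/-- Trace distance between two matrices. -/
noncomputable def traceDist {B : Type*} [Fintype B] [DecidableEq B] (ρ σ : Matrix B B ℂ) : ℝ :=
  (1/2) * traceNorm (ρ - σ)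

/-- A density matrix: positive semidefinite with unit trace. -/
def IsDensity {B : Type*} [Fintype B] (ρ : Matrix B B ℂ) : Prop :=
  ρ.PosSemidef ∧ ρ.trace = 1

/-- A cq-state given by its family of (subnormalized) conditional operators. -/
def IsCQ {X B : Type*} [Fintype X] [Fintype B] (ρ : X → Matrix B B ℂ) : Prop :=
  (∀ x, (ρ x).PosSemidef) ∧ (∑ x, (ρ x).trace) = 1

/-- The full matrix `Σ_x |x⟩⟨x| ⊗ ρ_{B∧x}` of a cq-state. -/
noncomputable def cqMatrix {X B : Type*} [Fintype X] [DecidableEq X] [Fintype B]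
    (ρ : X → Matrix B B ℂ) : Matrix (X × B) (X × B) ℂ :=
  ∑ x, (Matrix.single x x (1:ℂ)) ⊗ₖ ρ x

/-- Conditional min-entropy of a cq-state: the sup over density matrices σ and reals w with
`ρ_{B∧x} ≤ 2^{-w}·σ` for all `x` (Loewner order), of `w`; `⊥ = -∞` if no such pair exists. -/
noncomputable def qCondHmin {X B : Type*} [Fintype X] [Fintype B]
    (ρ : X → Matrix B B ℂ) : EReal :=
  sSup {z : EReal | ∃ w : ℝ, z = (w : EReal) ∧ ∃ σ : Matrix B B ℂ, σ.PosSemidef ∧ σ.trace = 1 ∧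
    ∀ x, (((2:ℝ) ^ (-w)) • σ - ρ x).PosSemidef}

/-- The maximally mixed state on `m` qubits. -/
noncomputable def mixed (m : ℕ) : Matrix (BS m) (BS m) ℂ := ((2:ℂ)^m)⁻¹ • 1

/-- A finitely supported probability distribution. -/
def IsDist {α : Type*} [Fintype α] (P : α → ℝ) : Prop := (∀ a, 0 ≤ P a) ∧ ∑ a, P a = 1

/-- Total variation distance. -/
noncomputable def TV {α : Type*} [Fintype α] (Q R : α → ℝ) : ℝ := (1/2) * ∑ a, |Q a - R a|

/-- Min-entropy of a distribution. -/
noncomputable def Hmin {X : Type*} [Fintype X] [Nonempty X] (P : X → ℝ) : ℝ :=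
  - Real.logb 2 (⨆ x, P x)

/-- Conditional min-entropy of a joint distribution. -/
noncomputable def HminCond {X Z : Type*} [Fintype X] [Nonempty X] [Fintype Z]
    (P : X → Z → ℝ) : ℝ :=
  - Real.logb 2 (∑ z, ⨆ x, P x z)

/-- `(k1,k2,ε)` X1-strong two-source extractor (no side information). -/
def IsStrongExt (n1 n2 m : ℕ) (Ext : BS n1 → BS n2 → BS m) (k1 k2 ε : ℝ) : Prop :=
  ∀ (P1 : BS n1 → ℝ) (P2 : BS n2 → ℝ), IsDist P1 → IsDist P2 →
    k1 ≤ Hmin P1 → k2 ≤ Hmin P2 →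
    TV (fun p : BS m × BS n1 => ∑ x2, if Ext p.2 x2 = p.1 then P1 p.2 * P2 x2 else 0)
       (fun p : BS m × BS n1 => ((2:ℝ)^m)⁻¹ * P1 p.2) ≤ ε

/-- `(k1,k2,ε)` X1-strong two-source extractor against classical product-type knowledge. -/
def IsStrongExtCPT (n1 n2 m : ℕ) (Ext : BS n1 → BS n2 → BS m) (k1 k2 ε : ℝ) : Prop :=
  ∀ (Z1 Z2 : Type) [Fintype Z1] [Fintype Z2],
    ∀ (P1 : BS n1 → Z1 → ℝ) (P2 : BS n2 → Z2 → ℝ),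
    IsDist (fun p : BS n1 × Z1 => P1 p.1 p.2) →
    IsDist (fun p : BS n2 × Z2 => P2 p.1 p.2) →
    k1 ≤ HminCond P1 → k2 ≤ HminCond P2 →
    TV (fun q : BS m × BS n1 × Z1 × Z2 =>
          ∑ x2, if Ext q.2.1 x2 = q.1 then P1 q.2.1 q.2.2.1 * P2 x2 q.2.2.2 else 0)
       (fun q : BS m × BS n1 × Z1 × Z2 =>
          ((2:ℝ)^m)⁻¹ * P1 q.2.1 q.2.2.1 * ∑ x2, P2 x2 q.2.2.2) ≤ ε

/-- `(k1,k2,ε)` weak two-source extractor against classical product-type knowledge. -/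
def IsWeakExtCPT (n1 n2 m : ℕ) (Ext : BS n1 → BS n2 → BS m) (k1 k2 ε : ℝ) : Prop :=
  ∀ (Z1 Z2 : Type) [Fintype Z1] [Fintype Z2],
    ∀ (P1 : BS n1 → Z1 → ℝ) (P2 : BS n2 → Z2 → ℝ),
    IsDist (fun p : BS n1 × Z1 => P1 p.1 p.2) →
    IsDist (fun p : BS n2 × Z2 => P2 p.1 p.2) →
    k1 ≤ HminCond P1 → k2 ≤ HminCond P2 →
    TV (fun q : BS m × Z1 × Z2 =>
          ∑ x1, ∑ x2, if Ext x1 x2 = q.1 then P1 x1 q.2.1 * P2 x2 q.2.2 else 0)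
       (fun q : BS m × Z1 × Z2 =>
          ((2:ℝ)^m)⁻¹ * (∑ x1, P1 x1 q.2.1) * ∑ x2, P2 x2 q.2.2) ≤ ε

/-- `(k1,k2,ε)` X1-strong two-source extractor against classical knowledge in the Markov model. -/
def IsStrongExtCMarkov (n1 n2 m : ℕ) (Ext : BS n1 → BS n2 → BS m) (k1 k2 ε : ℝ) : Prop :=
  ∀ (C : Type) [Fintype C], ∀ (P : BS n1 → BS n2 → C → ℝ),
    IsDist (fun q : BS n1 × BS n2 × C => P q.1 q.2.1 q.2.2) →
    (∀ x1 x2 c, P x1 x2 c * (∑ x1', ∑ x2', P x1' x2' c)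
        = (∑ x2', P x1 x2' c) * (∑ x1', P x1' x2 c)) →
    k1 ≤ HminCond (fun x1 c => ∑ x2, P x1 x2 c) →
    k2 ≤ HminCond (fun x2 c => ∑ x1, P x1 x2 c) →
    TV (fun q : BS m × BS n1 × C => ∑ x2, if Ext q.2.1 x2 = q.1 then P q.2.1 x2 q.2.2 else 0)
       (fun q : BS m × BS n1 × C => ((2:ℝ)^m)⁻¹ * ∑ x2, P q.2.1 x2 q.2.2) ≤ ε

/-- The output cq-state `ρ_{Ext(X1,X2) X1 C1 C2}` for product-type quantum side information. -/
noncomputable def qStrongOut {n1 n2 m : ℕ} {C1 C2 : Type}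
    [Fintype C1] [Fintype C2]
    (Ext : BS n1 → BS n2 → BS m)
    (ρ1 : BS n1 → Matrix C1 C1 ℂ) (ρ2 : BS n2 → Matrix C2 C2 ℂ) :
    Matrix (BS m × (BS n1 × C1) × C2) (BS m × (BS n1 × C1) × C2) ℂ :=
  ∑ x1, ∑ x2, (Matrix.single (Ext x1 x2) (Ext x1 x2) (1:ℂ)) ⊗ₖ
    (((Matrix.single x1 x1 (1:ℂ)) ⊗ₖ ρ1 x1) ⊗ₖ ρ2 x2)

/-- `(k1,k2,ε)` X1-strong two-source extractor against quantum product-type knowledge. -/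
def IsStrongExtQPT (n1 n2 m : ℕ) (Ext : BS n1 → BS n2 → BS m) (k1 k2 ε : ℝ) : Prop :=
  ∀ (C1 C2 : Type) [Fintype C1] [DecidableEq C1] [Fintype C2] [DecidableEq C2],
    ∀ (ρ1 : BS n1 → Matrix C1 C1 ℂ) (ρ2 : BS n2 → Matrix C2 C2 ℂ),
    IsCQ ρ1 → IsCQ ρ2 →
    (k1 : EReal) ≤ qCondHmin ρ1 → (k2 : EReal) ≤ qCondHmin ρ2 →
    traceDist (qStrongOut Ext ρ1 ρ2) (mixed m ⊗ₖ (cqMatrix ρ1 ⊗ₖ ∑ x2, ρ2 x2)) ≤ ε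

/-- `(k1,k2,ε)` weak two-source extractor against quantum product-type knowledge. -/
def IsWeakExtQPT (n1 n2 m : ℕ) (Ext : BS n1 → BS n2 → BS m) (k1 k2 ε : ℝ) : Prop :=
  ∀ (C1 C2 : Type) [Fintype C1] [DecidableEq C1] [Fintype C2] [DecidableEq C2],
    ∀ (ρ1 : BS n1 → Matrix C1 C1 ℂ) (ρ2 : BS n2 → Matrix C2 C2 ℂ),
    IsCQ ρ1 → IsCQ ρ2 →
    (k1 : EReal) ≤ qCondHmin ρ1 → (k2 : EReal) ≤ qCondHmin ρ2 →
    traceDist (∑ x1, ∑ x2, (Matrix.single (Ext x1 x2) (Ext x1 x2) (1:ℂ)) ⊗ₖ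
        ((ρ1 x1) ⊗ₖ ρ2 x2))
      (mixed m ⊗ₖ ((∑ x1, ρ1 x1) ⊗ₖ ∑ x2, ρ2 x2)) ≤ ε

/-- `(k1,k2,ε)` X1-strong two-source extractor against quantum knowledge in the Markov model,
in decomposed form. -/
def IsStrongExtQMarkov (n1 n2 m : ℕ) (Ext : BS n1 → BS n2 → BS m) (k1 k2 ε : ℝ) : Prop :=
  ∀ (Z C1 C2 : Type) [Fintype Z] [DecidableEq Z]
      [Fintype C1] [DecidableEq C1] [Fintype C2] [DecidableEq C2],
    ∀ (P : Z → ℝ) (ρ1 : Z → BS n1 → Matrix C1 C1 ℂ) (ρ2 : Z → BS n2 → Matrix C2 C2 ℂ),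
    IsDist P → (∀ z, IsCQ (ρ1 z)) → (∀ z, IsCQ (ρ2 z)) →
    (k1 : EReal) ≤ qCondHmin (fun x1 : BS n1 =>
      ∑ z, P z • (((ρ1 z x1) ⊗ₖ ∑ x2, ρ2 z x2) ⊗ₖ Matrix.single z z (1:ℂ))) →
    (k2 : EReal) ≤ qCondHmin (fun x2 : BS n2 =>
      ∑ z, P z • (((∑ x1, ρ1 z x1) ⊗ₖ ρ2 z x2) ⊗ₖ Matrix.single z z (1:ℂ))) →
    traceDist
      (∑ x1, ∑ x2, ∑ z, P z •
        ((Matrix.single (Ext x1 x2) (Ext x1 x2) (1:ℂ)) ⊗ₖ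
          ((Matrix.single x1 x1 (1:ℂ)) ⊗ₖ
            (((ρ1 z x1) ⊗ₖ ρ2 z x2) ⊗ₖ Matrix.single z z (1:ℂ)))))
      (mixed m ⊗ₖ cqMatrix (fun x1 : BS n1 =>
        ∑ z, P z • (((ρ1 z x1) ⊗ₖ ∑ x2, ρ2 z x2) ⊗ₖ Matrix.single z z (1:ℂ))))
      ≤ ε


/-!
Write `S = ρ_{ZE} - ω_m ⊗ ρ_E = Σ_z |z⟩⟨z| ⊗ D_z` with `D_z = ρ_{E∧z} - 2^{-m} ρ_E`, and let `V`
be the sign of the Hermitian matrix `S`, so that `‖S‖₁ = tr(V S)`. Splitting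
`tr(V S) = tr((W V W)(W⁻¹ S W⁻¹))` with `W = 1 ⊗ ρ_E^{1/4}` and applying Cauchy–Schwarz for the
Hilbert–Schmidt inner product gives `‖S‖₁² ≤ 2^m Σ_z tr(ρ_E^{-1/2} D_z ρ_E^{-1/2} D_z)`.
Parseval's identity for the Walsh characters `(-1)^{s·z}` turns the right-hand side into
`Σ_s tr(ρ_E^{-1/2} D̂_s ρ_E^{-1/2} D̂_s)`, where `D̂_0 = 0` and
`D̂_s = ρ_{E∧(s·Z=0)} - ρ_{E∧(s·Z=1)}` for `s ≠ 0`; each such term is at most `2 d_s`.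
-/

open scoped MatrixOrder

namespace Matrix

section

variable {n : Type*} [Fintype n]

lemma re_trace_conjTranspose_mul_sq_le (A B : Matrix n n ℂ) :
    (Aᴴ * B).trace.re ^ 2 ≤ (Aᴴ * A).trace.re * (Bᴴ * B).trace.re := by
  have key : ∀ X Y : Matrix n n ℂ, (Xᴴ * Y).trace =
      inner ℂ (WithLp.toLp 2 (fun p : n × n => X p.1 p.2) : EuclideanSpace ℂ (n × n))
        (WithLp.toLp 2 (fun p : n × n => Y p.1 p.2)) := by
    intro X Y
    simp only [trace, diag, mul_apply, conjTranspose_apply, PiLp.inner_apply,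
      RCLike.inner_apply, Fintype.sum_prod_type]
    rw [Finset.sum_comm]
    simp [mul_comm]
  rw [key, key, key]
  generalize (WithLp.toLp 2 (fun p : n × n => A p.1 p.2) : EuclideanSpace ℂ (n × n)) = a
  generalize (WithLp.toLp 2 (fun p : n × n => B p.1 p.2) : EuclideanSpace ℂ (n × n)) = b
  calc (inner ℂ a b).re ^ 2 ≤ ‖inner ℂ a b‖ * ‖inner ℂ b a‖ := by
        rw [norm_inner_symm b a, ← sq, ← sq_abs]
        exact pow_le_pow_left₀ (abs_nonneg _) (Complex.abs_re_le_norm _) 2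
    _ ≤ _ := inner_mul_inner_self_le a b

lemma PosSemidef.re_trace_nonneg {A : Matrix n n ℂ} (hA : A.PosSemidef) : 0 ≤ A.trace.re :=
  (Complex.nonneg_iff.mp hA.trace_nonneg).1

end

variable {n : Type*} [Fintype n] [DecidableEq n]

section

variable {𝕜 : Type*} [RCLike 𝕜]

lemma PosSemidef.sqrt_eq_cfcSqrt {A : Matrix n n 𝕜} (hA : A.PosSemidef) :
    hA.sqrt = CFC.sqrt A := by
  rw [CFC.sqrt_eq_real_sqrt A hA.nonneg, cfcₙ_eq_cfc, hA.1.cfc_eq, IsHermitian.cfc,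
    Unitary.conjStarAlgAut_apply]
  rfl

lemma PosSemidef.sqrt_mul_self {A : Matrix n n 𝕜} (hA : A.PosSemidef) :
    hA.sqrt * hA.sqrt = A := by
  rw [hA.sqrt_eq_cfcSqrt]; exact CFC.sqrt_mul_sqrt_self A hA.nonneg

lemma PosSemidef.sqrt_eq_of_mul_self_eq {A B : Matrix n n 𝕜} (hA : A.PosSemidef)
    (hB : B.PosSemidef) (hAB : A * A = B) : hB.sqrt = A := by
  rw [hB.sqrt_eq_cfcSqrt]; exact CFC.sqrt_unique hAB hA.nonneg

lemma PosDef.posDef_sqrt {A : Matrix n n 𝕜} (hA : A.PosDef) : hA.posSemidef.sqrt.PosDef := by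
  rw [PosSemidef.sqrt_eq_cfcSqrt, ← isStrictlyPositive_iff_posDef]
  exact IsStrictlyPositive.sqrt A (isStrictlyPositive_iff_posDef.mpr hA)

end

lemma IsHermitian.re_trace_mul_mul_mul_le {V R : Matrix n n ℂ} (hV : V.IsHermitian)
    (hVV : V * V = 1) (hR : R.IsHermitian) : (V * R * V * R).trace.re ≤ (R * R).trace.re := by
  have hRV : ((R * V)ᴴ * (R * V)).trace = (R * R).trace := by
    rw [conjTranspose_mul, hV.eq, hR.eq, trace_mul_comm,
      show R * V * (V * R) = R * (V * V) * R by simp only [Matrix.mul_assoc], hVV, Matrix.mul_one]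
  have hVR : ((V * R)ᴴ * (V * R)).trace = (R * R).trace := by
    rw [conjTranspose_mul, hV.eq, hR.eq,
      show R * V * (V * R) = R * (V * V) * R by simp only [Matrix.mul_assoc], hVV, Matrix.mul_one]
  refine le_of_sq_le_sq ?_ (hVR ▸ (posSemidef_conjTranspose_mul_self (V * R)).re_trace_nonneg)
  have h := re_trace_conjTranspose_mul_sq_le (R * V) (V * R)
  rwa [hRV, hVR, ← sq, conjTranspose_mul, hV.eq, hR.eq, ← Matrix.mul_assoc] at h

lemma traceNorm_eq_re_trace_cfcAbs (S : Matrix n n ℂ) : traceNorm S = (CFC.abs S).trace.re := by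
  rw [traceNorm, PosSemidef.sqrt_eq_cfcSqrt, CFC.abs, star_eq_conjTranspose]

/- `V` is the sign of `S`, so that `V * S = |S|`. -/
lemma IsHermitian.exists_re_trace_mul_eq_traceNorm {S : Matrix n n ℂ} (hS : S.IsHermitian) :
    ∃ V : Matrix n n ℂ, V.IsHermitian ∧ V * V = 1 ∧ (V * S).trace.re = traceNorm S := by
  have hcont : ∀ f : ℝ → ℝ, ContinuousOn f (spectrum ℝ S) :=
    fun f => S.finite_real_spectrum.continuousOn f
  set sgn : ℝ → ℝ := fun x => if x < 0 then -1 else 1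
  refine ⟨cfc sgn S, cfc_predicate sgn S, ?_, ?_⟩
  · rw [← cfc_mul sgn sgn S (hcont _) (hcont _), ← cfc_one ℝ S]
    refine cfc_congr fun x _ => ?_
    simp only [sgn]; split_ifs <;> norm_num
  · have hmul : cfc sgn S * S = cfc (fun x => sgn x * x) S := by
      rw [cfc_mul sgn (fun x => x) S (hcont _) (hcont _), cfc_id' ℝ S]
    rw [traceNorm_eq_re_trace_cfcAbs, CFC.abs_eq_cfc_norm S hS.isSelfAdjoint, hmul]
    congr 2
    refine cfc_congr fun x _ => ?_
    simp only [sgn, Real.norm_eq_abs]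
    split_ifs with h
    · rw [abs_of_neg h]; ring
    · rw [abs_of_nonneg (not_lt.mp h)]; ring

/- Cauchy–Schwarz for `tr((W V W)ᴴ (W⁻¹ S W⁻¹)) = tr(V S)`. -/
lemma IsHermitian.re_trace_mul_sq_le {S V W : Matrix n n ℂ} (hS : S.IsHermitian)
    (hV : V.IsHermitian) (hVV : V * V = 1) (hW : W.IsHermitian) (hWdet : IsUnit W.det) :
    (V * S).trace.re ^ 2 ≤
      (W * W * (W * W)).trace.re * ((W * W)⁻¹ * S * (W * W)⁻¹ * S).trace.re := by
  set A := W * V * W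
  set B := W⁻¹ * S * W⁻¹
  have hWWi : W * W⁻¹ = 1 := mul_nonsing_inv W hWdet
  have hWiW : W⁻¹ * W = 1 := nonsing_inv_mul W hWdet
  have hAB : (Aᴴ * B).trace = (V * S).trace := by
    rw [show Aᴴ * B = W * (V * (W * W⁻¹) * S * W⁻¹) by
        simp only [A, B, conjTranspose_mul, hV.eq, hW.eq, Matrix.mul_assoc],
      trace_mul_comm, hWWi, Matrix.mul_one, Matrix.mul_assoc, hWiW, Matrix.mul_one]
  have hAA : (Aᴴ * A).trace = (V * (W * W) * V * (W * W)).trace := by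
    rw [show Aᴴ * A = W * (V * (W * W) * V * W) by
        simp only [A, conjTranspose_mul, hV.eq, hW.eq, Matrix.mul_assoc],
      trace_mul_comm]
    simp only [Matrix.mul_assoc]
  have hBB : (Bᴴ * B).trace = ((W * W)⁻¹ * S * (W * W)⁻¹ * S).trace := by
    rw [trace_mul_comm (_ * S * _) S, mul_inv_rev,
      show Bᴴ * B = W⁻¹ * (S * W⁻¹ * W⁻¹ * S * W⁻¹) by
        simp only [B, conjTranspose_mul, hS.eq, conjTranspose_nonsing_inv, hW.eq,
          Matrix.mul_assoc],
      trace_mul_comm]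
    simp only [Matrix.mul_assoc]
  rw [← hAB, ← hBB]
  calc (Aᴴ * B).trace.re ^ 2 ≤ (Aᴴ * A).trace.re * (Bᴴ * B).trace.re :=
        re_trace_conjTranspose_mul_sq_le A B
    _ ≤ (W * W * (W * W)).trace.re * (Bᴴ * B).trace.re := by
        rw [hAA]
        exact mul_le_mul_of_nonneg_right (IsHermitian.re_trace_mul_mul_mul_le hV hVV
          (by simpa only [hW.eq] using isHermitian_conjTranspose_mul_self W))
          (posSemidef_conjTranspose_mul_self B).re_trace_nonneg

theorem IsHermitian.traceNorm_sq_le {S ρ : Matrix n n ℂ} (hS : S.IsHermitian) (hρ : ρ.PosDef) :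
    traceNorm S ^ 2 ≤ ρ.trace.re *
      ((hρ.posSemidef.sqrt)⁻¹ * S * (hρ.posSemidef.sqrt)⁻¹ * S).trace.re := by
  obtain ⟨V, hV, hVV, hVS⟩ := hS.exists_re_trace_mul_eq_traceNorm
  have hR := hρ.posDef_sqrt
  have hW := hR.posDef_sqrt
  have h := hS.re_trace_mul_sq_le hV hVV hW.isHermitian
    ((isUnit_iff_isUnit_det _).mp hW.isUnit)
  rwa [hR.posSemidef.sqrt_mul_self, hρ.posSemidef.sqrt_mul_self, hVS] at h

end Matrix

section CQ
variable {Z E : Type*} [Fintype Z] [DecidableEq Z] [Fintype E]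

lemma cqMatrix_eq_reindex_blockDiagonal (f : Z → Matrix E E ℂ) :
    cqMatrix f = reindex (Equiv.prodComm E Z) (Equiv.prodComm E Z) (blockDiagonal f) := by
  ext ⟨z, i⟩ ⟨z', j⟩
  simp only [cqMatrix, Matrix.sum_apply, kroneckerMap_apply, single_apply, reindex_apply,
    submatrix_apply, Equiv.prodComm_symm, Equiv.prodComm_apply, Prod.swap_prod_mk,
    blockDiagonal_apply]
  split_ifs with h
  · subst h; simp
  · refine Finset.sum_eq_zero fun x _ => ?_
    rw [if_neg fun hx => h (hx.1.symm.trans hx.2), zero_mul]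

lemma cqMatrix_mul (f g : Z → Matrix E E ℂ) :
    cqMatrix f * cqMatrix g = cqMatrix (fun z => f z * g z) := by
  simp only [cqMatrix_eq_reindex_blockDiagonal, reindex_apply, submatrix_mul_equiv,
    blockDiagonal_mul]

lemma cqMatrix_sub (f g : Z → Matrix E E ℂ) :
    cqMatrix f - cqMatrix g = cqMatrix (fun z => f z - g z) := by
  ext p q
  simp only [cqMatrix_eq_reindex_blockDiagonal, Matrix.sub_apply, reindex_apply, submatrix_apply,
    blockDiagonal_apply]
  split_ifs <;> simp

lemma trace_cqMatrix (f : Z → Matrix E E ℂ) : (cqMatrix f).trace = ∑ z, (f z).trace := by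
  rw [cqMatrix_eq_reindex_blockDiagonal, ← trace_blockDiagonal]
  exact Equiv.sum_comp (Equiv.prodComm E Z).symm fun p => blockDiagonal f p p

lemma isHermitian_cqMatrix {f : Z → Matrix E E ℂ} (hf : ∀ z, (f z).IsHermitian) :
    (cqMatrix f).IsHermitian := by
  rw [cqMatrix_eq_reindex_blockDiagonal]
  exact (isHermitian_blockDiagonal_iff.mpr hf).submatrix _

lemma cqMatrix_const [DecidableEq E] (A : Matrix E E ℂ) : cqMatrix (fun _ : Z => A) = 1 ⊗ₖ A := by
  rw [cqMatrix_eq_reindex_blockDiagonal, one_kronecker]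

theorem traceNorm_cqMatrix_sq_le [DecidableEq E] {D : Z → Matrix E E ℂ}
    (hD : ∀ z, (D z).IsHermitian) {ρ : Matrix E E ℂ} (hρ : ρ.PosDef) :
    traceNorm (cqMatrix D) ^ 2 ≤ Fintype.card Z * ρ.trace.re *
      ∑ z, ((hρ.posSemidef.sqrt)⁻¹ * D z * (hρ.posSemidef.sqrt)⁻¹ * D z).trace.re := by
  have hρ' : (cqMatrix fun _ : Z => ρ).PosDef := by
    rw [cqMatrix_const]; exact PosDef.one.kronecker hρ
  have hsqrt : hρ'.posSemidef.sqrt = cqMatrix fun _ => hρ.posSemidef.sqrt := by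
    refine PosSemidef.sqrt_eq_of_mul_self_eq ?_ hρ'.posSemidef ?_
    · rw [cqMatrix_const]; exact PosSemidef.one.kronecker hρ.posDef_sqrt.posSemidef
    · rw [cqMatrix_mul, hρ.posSemidef.sqrt_mul_self]
  have hinv : (cqMatrix fun _ : Z => hρ.posSemidef.sqrt)⁻¹ =
      cqMatrix fun _ => (hρ.posSemidef.sqrt)⁻¹ := by
    rw [cqMatrix_const, cqMatrix_const, inv_kronecker, inv_one]
  have h := (isHermitian_cqMatrix hD).traceNorm_sq_le hρ'
  rwa [hsqrt, hinv, cqMatrix_mul, cqMatrix_mul, cqMatrix_mul, trace_cqMatrix, trace_cqMatrix,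
    Complex.re_sum, Complex.re_sum, Finset.sum_const, Finset.card_univ, nsmul_eq_mul] at h

end CQ

section Walsh

variable {m : ℕ}

lemma toZ2_not (b : Bool) : toZ2 (!b) = toZ2 b + 1 := by cases b <;> decide

lemma toZ2_xor (a b : Bool) : toZ2 (xor a b) = toZ2 a + toZ2 b := by
  cases a <;> cases b <;> decide

lemma ipBool_comm (s z : BS m) : ipBool s z = ipBool z s := by
  simp only [ipBool, mul_comm]

lemma ipBool_zero_left (z : BS m) : ipBool (fun _ => false) z = false := by
  simp [ipBool, toZ2]

lemma ipBool_xor_right (s z z' : BS m) :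
    ipBool s (fun i => xor (z i) (z' i)) = xor (ipBool s z) (ipBool s z') := by
  have key : ∀ x y : ZMod 2, decide (x + y = 1) = xor (decide (x = 1)) (decide (y = 1)) := by
    decide
  simp only [ipBool, toZ2_xor, mul_add, Finset.sum_add_distrib, key]

lemma ipBool_update_not {s : BS m} {i : Fin m} (hs : s i = true) (z : BS m) :
    ipBool s (Function.update z i (!z i)) = !ipBool s z := by
  have key : ∀ x : ZMod 2, decide (x + 1 = 1) = !decide (x = 1) := by decide
  have hsum : ∑ j, toZ2 (s j) * toZ2 (Function.update z i (!z i) j) =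
      (∑ j, toZ2 (s j) * toZ2 (z j)) + 1 := by
    rw [← Finset.add_sum_erase _ _ (Finset.mem_univ i),
      ← Finset.add_sum_erase _ _ (Finset.mem_univ i), Function.update_self, toZ2_not, hs,
      Finset.sum_congr rfl fun j hj => by rw [Function.update_of_ne (Finset.ne_of_mem_erase hj)]]
    simp only [toZ2, if_true]
    ring
  rw [ipBool, hsum, key, ipBool]

variable {R : Type*} [CommRing R]

def walshChar (s z : BS m) : R := if ipBool s z then -1 else 1

lemma walshChar_zero_left (z : BS m) : walshChar (fun _ => false) z = (1 : R) := by
  simp [walshChar, ipBool_zero_left]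

lemma walshChar_mul_self (s z : BS m) : walshChar s z * walshChar s z = (1 : R) := by
  unfold walshChar; split_ifs <;> simp

lemma walshChar_mul_walshChar (s z z' : BS m) :
    (walshChar s z : R) * walshChar s z' = walshChar (fun i => xor (z i) (z' i)) s := by
  unfold walshChar
  rw [ipBool_comm _ s, ipBool_xor_right]
  cases ipBool s z <;> cases ipBool s z' <;> simp

lemma sum_walshChar_eq_zero {s : BS m} (hs : s ≠ fun _ => false) :
    ∑ z, walshChar s z = (0 : R) := by
  obtain ⟨i, hi⟩ := Function.ne_iff.mp hs
  replace hi : s i = true := by simpa using hi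
  refine Finset.sum_ninvolution (fun z => Function.update z i (!z i)) (fun z => ?_)
    (fun z _ h => ?_) (fun _ => Finset.mem_univ _) (fun z => by simp)
  · simp only [walshChar, ipBool_update_not hi]
    cases ipBool s z <;> simp
  · simpa using congrFun h i

lemma sum_walshChar_mul_walshChar (z z' : BS m) :
    ∑ s, (walshChar s z : R) * walshChar s z' = if z = z' then 2 ^ m else 0 := by
  split_ifs with h
  · simp [h, walshChar_mul_self]
  simp only [walshChar_mul_walshChar]
  refine sum_walshChar_eq_zero fun hzz' => h (funext fun i => ?_)
  have := congrFun hzz' i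
  revert this; cases z i <;> cases z' i <;> simp

theorem sum_bilin_walsh_eq_two_pow_mul {V : Type*} [AddCommGroup V] [Module R V]
    (B : V →ₗ[R] V →ₗ[R] R) (f : BS m → V) :
    ∑ s, B (∑ z, (walshChar s z : R) • f z) (∑ z, (walshChar s z : R) • f z) =
      2 ^ m * ∑ z, B (f z) (f z) := by
  simp only [map_sum, map_smul, LinearMap.sum_apply, LinearMap.smul_apply, smul_eq_mul,
    Finset.mul_sum, ← mul_assoc]
  rw [Finset.sum_comm]
  refine (Finset.sum_congr rfl fun z _ => Finset.sum_comm).trans ?_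
  simp only [← Finset.sum_mul, sum_walshChar_mul_walshChar, ite_mul, zero_mul,
    Finset.sum_ite_eq, Finset.mem_univ, if_true]

/-- `ρ_{E∧(s·Z=i)}` in the notation of the statement. -/
def parityPart {V : Type*} [AddCommMonoid V] (f : BS m → V) (s : BS m) (i : Bool) : V :=
  ∑ z ∈ Finset.univ.filter (fun z => ipBool s z = i), f z

lemma parityPart_false_add_true {V : Type*} [AddCommMonoid V] (f : BS m → V) (s : BS m) :
    parityPart f s false + parityPart f s true = ∑ z, f z := by
  simp only [parityPart, ← Bool.not_eq_false]
  exact Finset.sum_filter_add_sum_filter_not _ _ _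

lemma sum_walshChar_smul {V : Type*} [AddCommGroup V] [Module R V] (f : BS m → V) (s : BS m) :
    ∑ z, (walshChar s z : R) • f z = parityPart f s false - parityPart f s true := by
  rw [← Finset.sum_filter_add_sum_filter_not _ (fun z => ipBool s z = false), sub_eq_add_neg,
    parityPart, parityPart, ← Finset.sum_neg_distrib]
  congr 1
  · refine Finset.sum_congr rfl fun z hz => ?_
    rw [walshChar, if_neg (by simpa using hz), one_smul]
  · simp only [Bool.not_eq_false]
    refine Finset.sum_congr rfl fun z hz => ?_
    rw [walshChar, if_pos (by simpa using hz), neg_one_smul]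

theorem sum_bilin_sub_average {𝕜 V : Type*} [Field 𝕜] [CharZero 𝕜] [AddCommGroup V] [Module 𝕜 V]
    (B : V →ₗ[𝕜] V →ₗ[𝕜] 𝕜) (f : BS m → V) :
    2 ^ m * ∑ z, B (f z - ((2 : 𝕜) ^ m)⁻¹ • ∑ z', f z') (f z - ((2 : 𝕜) ^ m)⁻¹ • ∑ z', f z') =
      ∑ s ∈ Finset.univ.filter (fun s : BS m => s ≠ fun _ => false),
        B (parityPart f s false - parityPart f s true)
          (parityPart f s false - parityPart f s true) := by
  set g := fun z => f z - ((2 : 𝕜) ^ m)⁻¹ • ∑ z', f z'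
  have hg0 : ∑ z, (walshChar (fun _ => false) z : 𝕜) • g z = 0 := by
    simp only [walshChar_zero_left, one_smul, g, Finset.sum_sub_distrib, Finset.sum_const,
      Finset.card_univ, Fintype.card_fun, Fintype.card_bool, Fintype.card_fin]
    rw [← Nat.cast_smul_eq_nsmul 𝕜, smul_smul]
    push_cast
    rw [mul_inv_cancel₀ (pow_ne_zero _ two_ne_zero), one_smul, sub_self]
  have hg : ∀ s ≠ (fun _ => false), ∑ z, (walshChar s z : 𝕜) • g z =
      parityPart f s false - parityPart f s true := by
    intro s hs
    simp only [g, smul_sub, Finset.sum_sub_distrib, ← Finset.sum_smul, sum_walshChar_eq_zero hs,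
      zero_smul, sub_zero, sum_walshChar_smul]
  rw [← sum_bilin_walsh_eq_two_pow_mul B g,
    ← Finset.sum_filter_add_sum_filter_not _ (fun s => s ≠ fun _ => false)]
  simp only [not_not, Finset.filter_eq', Finset.mem_univ, if_true, Finset.sum_singleton, hg0,
    map_zero, add_zero]
  exact Finset.sum_congr rfl fun s hs => by rw [hg s (Finset.mem_filter.mp hs).2]

end Walsh

lemma sub_sub_add_le_sum_abs_sub_average (a : Bool → Bool → ℝ) :
    a false false - a false true - a true false + a true true ≤
      ∑ i, ∑ i', |a i i' - 1 / 2 * (a i false + a i true)| := by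
  simp only [Fintype.sum_bool]
  linarith [le_abs_self (a true true - 1 / 2 * (a true false + a true true)),
    neg_le_abs (a true false - 1 / 2 * (a true false + a true true)),
    neg_le_abs (a false true - 1 / 2 * (a false false + a false true)),
    le_abs_self (a false false - 1 / 2 * (a false false + a false true))]

def sandwichTrace {E : Type*} [Fintype E] (M : Matrix E E ℂ) :
    Matrix E E ℂ →ₗ[ℂ] Matrix E E ℂ →ₗ[ℂ] ℂ :=
  LinearMap.mk₂ ℂ (fun X Y => (M * X * M * Y).trace)
    (fun _ _ _ => by simp only [Matrix.mul_add, Matrix.add_mul, trace_add])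
    (fun _ _ _ => by simp only [Matrix.mul_smul, Matrix.smul_mul, trace_smul])
    (fun _ _ _ => by simp only [Matrix.mul_add, trace_add])
    (fun _ _ _ => by simp only [Matrix.mul_smul, trace_smul])

lemma re_sandwichTrace_parity_le {m : ℕ} {E : Type*} [Fintype E] (M : Matrix E E ℂ)
    (ρ : BS m → Matrix E E ℂ) (s : BS m) :
    (M * (parityPart ρ s false - parityPart ρ s true) * M *
        (parityPart ρ s false - parityPart ρ s true)).trace.re ≤
      ∑ i, ∑ i', |(M * parityPart ρ s i * M * parityPart ρ s i').trace.re -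
        1 / 2 * (M * parityPart ρ s i * M * ∑ z, ρ z).trace.re| := by
  have h := sub_sub_add_le_sum_abs_sub_average
    fun i i' => (M * parityPart ρ s i * M * parityPart ρ s i').trace.re
  simp only [← parityPart_false_add_true ρ s, Matrix.mul_add, trace_add, Complex.add_re]
  refine le_trans (le_of_eq ?_) h
  simp only [Matrix.mul_sub, Matrix.sub_mul, trace_sub, Complex.sub_re]
  ring

theorem two_pow_mul_sum_re_sandwichTrace_le {m : ℕ} {E : Type*} [Fintype E]
    (M : Matrix E E ℂ) (ρ : BS m → Matrix E E ℂ) :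
    2 ^ m * ∑ z, (M * (ρ z - ((2 : ℂ) ^ m)⁻¹ • ∑ z', ρ z') * M *
        (ρ z - ((2 : ℂ) ^ m)⁻¹ • ∑ z', ρ z')).trace.re ≤
      ∑ s ∈ Finset.univ.filter (fun s : BS m => s ≠ fun _ => false),
        ∑ i, ∑ i', |(M * parityPart ρ s i * M * parityPart ρ s i').trace.re -
          1 / 2 * (M * parityPart ρ s i * M * ∑ z, ρ z).trace.re| := by
  have h := congrArg Complex.re (sum_bilin_sub_average (sandwichTrace M) ρ)
  rw [show (2 : ℂ) ^ m = ((2 ^ m : ℝ) : ℂ) by push_cast; rfl, Complex.re_ofReal_mul] at h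
  simp only [sandwichTrace, LinearMap.mk₂_apply, Complex.re_sum] at h
  push_cast at h
  rw [h]
  exact Finset.sum_le_sum fun s _ => re_sandwichTrace_parity_le M ρ s

theorem stmt6 {m : ℕ} {E : Type} [Fintype E] [DecidableEq E]
    (ρ : BS m → Matrix E E ℂ) (hρ : IsCQ ρ) (hE : (∑ z, ρ z).PosDef) :
    traceDist (cqMatrix ρ) (mixed m ⊗ₖ ∑ z, ρ z)
      ≤ Real.sqrt ((1/2) * ∑ s ∈ Finset.univ.filter (fun s : BS m => s ≠ (fun _ => false)),
          ((1/2) * ∑ i : Bool, ∑ i' : Bool,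
            |(Matrix.trace
                (((hE.posSemidef.sqrt)⁻¹ *
                    (∑ z ∈ Finset.univ.filter (fun z : BS m => ipBool s z = i), ρ z) *
                  (hE.posSemidef.sqrt)⁻¹) *
                 (∑ z ∈ Finset.univ.filter (fun z : BS m => ipBool s z = i'), ρ z))).re
              - (1/2) * (Matrix.trace
                (((hE.posSemidef.sqrt)⁻¹ *
                    (∑ z ∈ Finset.univ.filter (fun z : BS m => ipBool s z = i), ρ z) *
                  (hE.posSemidef.sqrt)⁻¹) * (∑ z, ρ z))).re|)) := by
  set D : BS m → Matrix E E ℂ := fun z => ρ z - ((2 : ℂ) ^ m)⁻¹ • ∑ z', ρ z'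
  have hD : ∀ z, (D z).IsHermitian := fun z =>
    (hρ.1 z).1.sub (hE.isHermitian.smul (by simp [IsSelfAdjoint]))
  have hS : cqMatrix ρ - mixed m ⊗ₖ ∑ z, ρ z = cqMatrix D := by
    rw [mixed, smul_kronecker, ← kronecker_smul, ← cqMatrix_const, cqMatrix_sub]
  have hnorm := traceNorm_cqMatrix_sq_le hD hE
  have hfourier := two_pow_mul_sum_re_sandwichTrace_le (hE.posSemidef.sqrt)⁻¹ ρ
  have htr : (∑ z, ρ z).trace = 1 := by rw [trace_sum]; exact hρ.2
  simp only [htr, Complex.one_re, mul_one, Fintype.card_fun, Fintype.card_bool,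
    Fintype.card_fin, Nat.cast_pow, Nat.cast_ofNat] at hnorm
  rw [traceDist, hS]
  refine (le_abs_self _).trans (Real.abs_le_sqrt ?_)
  rw [← Finset.mul_sum, show ∀ x : ℝ, (1 / 2 * x) ^ 2 = 1 / 2 * (1 / 2 * x ^ 2) by intro; ring]
  gcongr
  exact hnorm.trans hfourier
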